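/- Let A be a POVM with n outcomes on ℂ³, and let A^⊥ = {B ∈ Matrix (Fin 3) (Fin 3) ℂ : trace(Bᴴ * A j) = 0 for all j} be the orthogonal complement of the span of the POVM elements with respect to the Hilbert–Schmidt inner product. Then A is informationally complete with respect to the set of pure states on ℂ³ if and only if either A^⊥ = {0}, or there exists an invertible selfadjoint matrix T with trace T = 0 such that A^⊥ = {c • T : c ∈ ℂ}. -/

import Mathlib

open Matrix
open scoped ComplexOrder

/-- A POVM with `n` outcomes on `ℂ^d`: a family of positive semidefinite matrices summing to the
identity. -/
def IsPOVM {d n : ℕ} (A : Fin n → Matrix (Fin d) (Fin d) ℂ) : Prop :=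
  (∀ j, (A j).PosSemidef) ∧ ∑ j, A j = 1

/-- A state on `ℂ^d`: a positive semidefinite matrix with trace 1. -/
def IsState {d : ℕ} (ρ : Matrix (Fin d) (Fin d) ℂ) : Prop :=
  ρ.PosSemidef ∧ ρ.trace = 1

/-- A family of matrices (e.g. a POVM or a collection of selfadjoint operators) is
informationally complete w.r.t. a set `P` of states if the expectation values
`trace (ρ * A j)` separate the points of `P`. -/
def IsIC {d n : ℕ} (A : Fin n → Matrix (Fin d) (Fin d) ℂ)
    (P : Set (Matrix (Fin d) (Fin d) ℂ)) : Prop :=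
  ∀ ρ₁ ∈ P, ∀ ρ₂ ∈ P, (∀ j, (ρ₁ * A j).trace = (ρ₂ * A j).trace) → ρ₁ = ρ₂

/-- The set of pure states on `ℂ^d`: states of rank 1. -/
def PureStates (d : ℕ) : Set (Matrix (Fin d) (Fin d) ℂ) :=
  {ρ | IsState ρ ∧ ρ.rank = 1}

/-!
Let `V` be the Hilbert–Schmidt orthogonal complement of the POVM elements; it is closed under `ᴴ`
and traceless, because the `A j` are Hermitian and sum to `1`. A traceless Hermitian `3 × 3`
matrix is singular exactly when its eigenvalues are `t, -t, 0`, i.e. when it is a multiple of a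
difference of two pure states, and a difference of two pure states has rank at most `2`. Hence
informational completeness for pure states says that every nonzero Hermitian element of `V` is
invertible. In odd dimension two such elements `X`, `T` are then real multiples of each other:
otherwise `θ ↦ det (cos θ • X + sin θ • T)` is real, changes sign between `0` and `π`, and so
vanishes at a nonzero matrix. Splitting into real and imaginary parts, `V` is `{0}` or a complex
line through an invertible Hermitian matrix.
-/

open ComplexStarModule Complex

section StarModule

variable {E : Type*} [AddCommGroup E] [Module ℂ E] [StarAddMonoid E] [StarModule ℂ E]
  {V : Submodule ℂ E}

theorem Submodule.realPart_mem (hV : ∀ a ∈ V, star a ∈ V) {a : E} (ha : a ∈ V) :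
    (ℜ a : E) ∈ V := by
  rw [realPart_apply_coe]
  exact V.smul_of_tower_mem _ (V.add_mem ha (hV a ha))

theorem Submodule.imaginaryPart_mem (hV : ∀ a ∈ V, star a ∈ V) {a : E} (ha : a ∈ V) :
    (ℑ a : E) ∈ V := by
  rw [imaginaryPart_apply_coe]
  exact V.smul_mem _ (V.smul_of_tower_mem _ (V.sub_mem ha (hV a ha)))

theorem Submodule.exists_isSelfAdjoint_mem_ne_zero (hV : ∀ a ∈ V, star a ∈ V) (hV0 : V ≠ ⊥) :
    ∃ T ∈ V, IsSelfAdjoint T ∧ T ≠ 0 := by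
  obtain ⟨a, ha, ha0⟩ := V.ne_bot_iff.1 hV0
  by_contra! h
  have hre := h _ (V.realPart_mem hV ha) (ℜ a).2
  have him := h _ (V.imaginaryPart_mem hV ha) (ℑ a).2
  rw [← realPart_add_I_smul_imaginaryPart a, hre, him, smul_zero, add_zero] at ha0
  exact ha0 rfl

theorem Submodule.eq_span_singleton_of_forall_isSelfAdjoint (hV : ∀ a ∈ V, star a ∈ V)
    {T : E} (hT : T ∈ V) (h : ∀ a ∈ V, IsSelfAdjoint a → ∃ r : ℝ, a = r • T) :
    V = ℂ ∙ T := by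
  refine le_antisymm (fun a ha => ?_) ((span_singleton_le_iff_mem _ _).2 hT)
  obtain ⟨r, hr⟩ := h _ (V.realPart_mem hV ha) (ℜ a).2
  obtain ⟨s, hs⟩ := h _ (V.imaginaryPart_mem hV ha) (ℑ a).2
  have hT' := mem_span_singleton_self (R := ℂ) T
  rw [← realPart_add_I_smul_imaginaryPart a, hr, hs]
  exact add_mem (smul_of_tower_mem _ r hT') (smul_mem _ _ (smul_of_tower_mem _ s hT'))

end StarModule

namespace Matrix

variable {ι : Type*}

theorem IsHermitian.real_smul_add_real_smul {X T : Matrix ι ι ℂ} (hX : X.IsHermitian)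
    (hT : T.IsHermitian) (a b : ℝ) : (a • X + b • T).IsHermitian :=
  ((IsSelfAdjoint.all a).smul hX).add ((IsSelfAdjoint.all b).smul hT)

variable [Fintype ι]

theorem rank_sub_le {K : Type*} [Field K] (A B : Matrix ι ι K) :
    (A - B).rank ≤ A.rank + B.rank := by
  have h : LinearMap.range (A - B).mulVecLin ≤
      LinearMap.range A.mulVecLin ⊔ LinearMap.range B.mulVecLin := by
    rintro _ ⟨v, rfl⟩
    rw [mulVecLin_apply, sub_mulVec]
    exact Submodule.sub_mem _ (Submodule.mem_sup_left ⟨v, rfl⟩)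
      (Submodule.mem_sup_right ⟨v, rfl⟩)
  exact (Submodule.finrank_mono h).trans (Submodule.finrank_add_le_finrank_add_finrank _ _)

variable [DecidableEq ι]

theorem IsHermitian.ofReal_re_det {M : Matrix ι ι ℂ} (hM : M.IsHermitian) :
    ((M.det.re : ℝ) : ℂ) = M.det :=
  conj_eq_iff_re.1 (by rw [← star_def, ← det_conjTranspose, hM.eq])

theorem IsHermitian.exists_eq_real_smul_of_det_ne_zero (hι : Odd (Fintype.card ι))
    {X T : Matrix ι ι ℂ} (hX : X.IsHermitian) (hT : T.IsHermitian) (hT0 : T ≠ 0)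
    (hdet : ∀ a b : ℝ, a • X + b • T ≠ 0 → (a • X + b • T).det ≠ 0) :
    ∃ r : ℝ, X = r • T := by
  by_contra! hXT
  have hindep := LinearIndependent.pair_iff.1
    ((LinearIndependent.pair_iff' hT0).2 fun r h => hXT r h.symm)
  set g : ℝ → Matrix ι ι ℂ := fun θ => Real.cos θ • X + Real.sin θ • T
  have hg : Continuous fun θ => (g θ).det.re := by fun_prop
  -- `g π = -g 0`, and `det (-M) = -det M` in odd dimension
  have hg_pi : (g Real.pi).det.re = -(g 0).det.re := by
    simp [g, det_neg, hι.neg_one_pow]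
  obtain ⟨θ, -, hθ⟩ : ∃ θ ∈ Set.uIcc 0 Real.pi, (g θ).det.re = 0 := by
    refine intermediate_value_uIcc hg.continuousOn ?_
    rw [hg_pi, Set.mem_uIcc]
    rcases le_total 0 (g 0).det.re with h | h
    · exact Or.inr ⟨by linarith, h⟩
    · exact Or.inl ⟨h, by linarith⟩
  have hgθ : (g θ).IsHermitian := hX.real_smul_add_real_smul hT _ _
  refine hdet _ _ (fun h => ?_) (by rw [← hgθ.ofReal_re_det, hθ, ofReal_zero])
  obtain ⟨hc, hs⟩ := hindep _ _ (by rw [add_comm]; exact h)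
  simpa [hc, hs] using Real.sin_sq_add_cos_sq θ

theorem forall_isUnit_iff_eq_bot_or_eq_span (hι : Odd (Fintype.card ι))
    {V : Submodule ℂ (Matrix ι ι ℂ)} (hV : ∀ B ∈ V, star B ∈ V) :
    (∀ B ∈ V, B.IsHermitian → B ≠ 0 → IsUnit B) ↔
      V = ⊥ ∨ ∃ T ∈ V, T.IsHermitian ∧ IsUnit T ∧ V = ℂ ∙ T := by
  constructor
  · intro hunit
    refine or_iff_not_imp_left.2 fun hV0 => ?_
    obtain ⟨T, hTV, hT, hT0⟩ := V.exists_isSelfAdjoint_mem_ne_zero hV hV0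
    refine ⟨T, hTV, hT, hunit T hTV hT hT0,
      V.eq_span_singleton_of_forall_isSelfAdjoint hV hTV fun X hXV hX => ?_⟩
    refine IsHermitian.exists_eq_real_smul_of_det_ne_zero hι hX hT hT0 fun a b hab => ?_
    have hmem : a • X + b • T ∈ V :=
      add_mem (V.smul_of_tower_mem a hXV) (V.smul_of_tower_mem b hTV)
    exact ((isUnit_iff_isUnit_det _).1
      (hunit _ hmem (IsHermitian.real_smul_add_real_smul hX hT a b) hab)).ne_zero
  · rintro (rfl | ⟨T, -, -, hTu, rfl⟩) B hB - hB0
    · exact absurd ((Submodule.mem_bot ℂ).1 hB) hB0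
    · obtain ⟨c, rfl⟩ := Submodule.mem_span_singleton.1 hB
      exact (isUnit_smul_iff (Units.mk0 c (by rintro rfl; simp at hB0)) T).2 hTu

end Matrix

section HilbertSchmidt

variable {d n : ℕ} {A : Fin n → Matrix (Fin d) (Fin d) ℂ}

def hilbertSchmidtOrthogonal (A : Fin n → Matrix (Fin d) (Fin d) ℂ) :
    Submodule ℂ (Matrix (Fin d) (Fin d) ℂ) where
  carrier := {B | ∀ j, (Bᴴ * A j).trace = 0}
  add_mem' hB hC j := by rw [conjTranspose_add, add_mul, trace_add, hB j, hC j, add_zero]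
  zero_mem' j := by simp
  smul_mem' c B hB j := by rw [conjTranspose_smul, smul_mul, trace_smul, hB j, smul_zero]

theorem star_mem_hilbertSchmidtOrthogonal (hA : ∀ j, (A j).IsHermitian)
    {B : Matrix (Fin d) (Fin d) ℂ} (hB : B ∈ hilbertSchmidtOrthogonal A) :
    star B ∈ hilbertSchmidtOrthogonal A := by
  intro j
  rw [star_eq_conjTranspose, conjTranspose_conjTranspose]
  have h := congrArg star (hB j)
  rwa [star_zero, ← trace_conjTranspose, conjTranspose_mul, conjTranspose_conjTranspose,
    (hA j).eq, trace_mul_comm] at h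

theorem trace_eq_zero_of_mem_hilbertSchmidtOrthogonal (hsum : ∑ j, A j = 1)
    {B : Matrix (Fin d) (Fin d) ℂ} (hB : B ∈ hilbertSchmidtOrthogonal A) : B.trace = 0 := by
  rw [← star_eq_zero, ← trace_conjTranspose, ← mul_one Bᴴ, ← hsum, Finset.mul_sum, trace_sum]
  exact Finset.sum_eq_zero fun j _ => hB j

theorem sub_mem_hilbertSchmidtOrthogonal_iff {ρ₁ ρ₂ : Matrix (Fin d) (Fin d) ℂ}
    (h₁ : ρ₁.IsHermitian) (h₂ : ρ₂.IsHermitian) :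
    ρ₁ - ρ₂ ∈ hilbertSchmidtOrthogonal A ↔ ∀ j, (ρ₁ * A j).trace = (ρ₂ * A j).trace := by
  refine forall_congr' fun j => ?_
  rw [conjTranspose_sub, h₁.eq, h₂.eq, sub_mul, trace_sub, sub_eq_zero]

end HilbertSchmidt

section PureStates

variable {d : ℕ}

theorem vecMulVec_star_mem_pureStates {v : Fin d → ℂ} (hv : star v ⬝ᵥ v = 1) :
    vecMulVec v (star v) ∈ PureStates d := by
  have htr : (vecMulVec v (star v)).trace = 1 := by rw [trace_vecMulVec, dotProduct_comm, hv]
  refine ⟨⟨posSemidef_vecMulVec_self_star v, htr⟩, le_antisymm (rank_vecMulVec_le _ _) ?_⟩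
  have hv0 : v ≠ 0 := by rintro rfl; simp at hv
  have hrange : v ∈ LinearMap.range (vecMulVec v (star v)).mulVecLin :=
    ⟨v, by simp [vecMulVec_mulVec, hv]⟩
  rw [Nat.one_le_iff_ne_zero, rank, Ne, Submodule.finrank_eq_zero]
  exact (Submodule.ne_bot_iff _).2 ⟨v, hrange, hv0⟩

theorem conjStarAlgAut_diagonal_single_mem_pureStates (U : unitaryGroup (Fin d) ℂ)
    (i : Fin d) : Unitary.conjStarAlgAut ℂ _ U (diagonal (Pi.single i 1)) ∈ PureStates d := by
  set u : Fin d → ℂ := (U : Matrix (Fin d) (Fin d) ℂ) *ᵥ Pi.single i 1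
  have hU : Unitary.conjStarAlgAut ℂ _ U (diagonal (Pi.single i 1)) = vecMulVec u (star u) := by
    rw [Unitary.conjStarAlgAut_apply, diagonal_single, single_eq_single_vecMulVec_single,
      mul_vecMulVec, vecMulVec_mul, star_mulVec]
    simp [u, star_eq_conjTranspose]
  rw [hU]
  apply vecMulVec_star_mem_pureStates
  rw [star_mulVec, dotProduct_mulVec, vecMul_vecMul]
  simp [← star_eq_conjTranspose]

theorem not_isUnit_sub_of_mem_pureStates (hd : 2 < d) {ρ₁ ρ₂ : Matrix (Fin d) (Fin d) ℂ}
    (h₁ : ρ₁ ∈ PureStates d) (h₂ : ρ₂ ∈ PureStates d) : ¬IsUnit (ρ₁ - ρ₂) := by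
  intro hu
  have h := rank_sub_le ρ₁ ρ₂
  rw [h₁.2, h₂.2, rank_of_isUnit _ hu, Fintype.card_fin] at h
  omega

end PureStates

theorem exists_eq_smul_single_sub_single {μ : Fin 3 → ℝ} (hsum : ∑ k, μ k = 0)
    (hprod : ∏ k, μ k = 0) (hμ : μ ≠ 0) :
    ∃ t : ℝ, t ≠ 0 ∧ ∃ i j : Fin 3, μ = t • (Pi.single i 1 - Pi.single j 1) := by
  obtain ⟨k, -, hk⟩ := Finset.prod_eq_zero_iff.1 hprod
  rw [Fin.sum_univ_three] at hsum
  obtain ⟨t, i, j, rfl⟩ :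
      ∃ t : ℝ, ∃ i j : Fin 3, μ = t • (Pi.single i 1 - Pi.single j 1) := by
    fin_cases k
    · exact ⟨μ 1, 1, 2, by ext l; fin_cases l <;> simp at hk ⊢ <;> linarith⟩
    · exact ⟨μ 0, 0, 2, by ext l; fin_cases l <;> simp at hk ⊢ <;> linarith⟩
    · exact ⟨μ 0, 0, 1, by ext l; fin_cases l <;> simp at hk ⊢ <;> linarith⟩
  exact ⟨t, by rintro rfl; simp at hμ, i, j, rfl⟩

theorem exists_mem_pureStates_eq_smul_sub {B : Matrix (Fin 3) (Fin 3) ℂ} (hB : B.IsHermitian)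
    (htr : B.trace = 0) (hdet : B.det = 0) (hB0 : B ≠ 0) :
    ∃ ρ₁ ∈ PureStates 3, ∃ ρ₂ ∈ PureStates 3, ∃ t : ℂ, t ≠ 0 ∧ B = t • (ρ₁ - ρ₂) := by
  have hsum : ∑ k, hB.eigenvalues k = 0 :=
    ofReal_eq_zero.1 (by push_cast; exact hB.trace_eq_sum_eigenvalues.symm.trans htr)
  have hprod : ∏ k, hB.eigenvalues k = 0 :=
    ofReal_eq_zero.1 (by push_cast; exact hB.det_eq_prod_eigenvalues.symm.trans hdet)
  obtain ⟨t, ht, i, j, hμ⟩ :=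
    exists_eq_smul_single_sub_single hsum hprod (mt hB.eigenvalues_eq_zero_iff.1 hB0)
  refine ⟨_, conjStarAlgAut_diagonal_single_mem_pureStates hB.eigenvectorUnitary i,
    _, conjStarAlgAut_diagonal_single_mem_pureStates hB.eigenvectorUnitary j, t,
    ofReal_ne_zero.2 ht, ?_⟩
  rw [← map_sub, ← map_smul, diagonal_sub, ← diagonal_smul]
  conv_lhs => rw [hB.spectral_theorem, hμ]
  congr 2
  ext k
  simp only [Function.comp_apply, Pi.smul_apply, Pi.sub_apply, smul_eq_mul,
    RCLike.ofReal_mul, RCLike.ofReal_sub, Pi.single_apply]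
  split_ifs <;> simp

theorem isIC_pureStates_iff_forall_isUnit {n : ℕ} {A : Fin n → Matrix (Fin 3) (Fin 3) ℂ}
    (hsum : ∑ j, A j = 1) :
    IsIC A (PureStates 3) ↔
      ∀ B ∈ hilbertSchmidtOrthogonal A, B.IsHermitian → B ≠ 0 → IsUnit B := by
  constructor
  · intro hIC B hB hBh hB0
    by_contra hBu
    obtain ⟨ρ₁, h₁, ρ₂, h₂, t, ht, rfl⟩ := exists_mem_pureStates_eq_smul_sub hBh
      (trace_eq_zero_of_mem_hilbertSchmidtOrthogonal hsum hB)
      (by rwa [isUnit_iff_isUnit_det, isUnit_iff_ne_zero, not_not] at hBu) hB0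
    have hρ : ρ₁ - ρ₂ ∈ hilbertSchmidtOrthogonal A := (Submodule.smul_mem_iff _ ht).1 hB
    rw [hIC ρ₁ h₁ ρ₂ h₂ ((sub_mem_hilbertSchmidtOrthogonal_iff h₁.1.1.isHermitian
      h₂.1.1.isHermitian).1 hρ), sub_self, smul_zero] at hB0
    exact hB0 rfl
  · intro hunit ρ₁ h₁ ρ₂ h₂ hρ
    by_contra hne
    have hh₁ := h₁.1.1.isHermitian
    have hh₂ := h₂.1.1.isHermitian
    exact not_isUnit_sub_of_mem_pureStates (by norm_num) h₁ h₂ (hunit _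
      ((sub_mem_hilbertSchmidtOrthogonal_iff hh₁ hh₂).2 hρ) (hh₁.sub hh₂) (sub_ne_zero.2 hne))

/-- Prop. 8 of the paper: a POVM on `ℂ³` is informationally complete w.r.t. the pure states iff
the Hilbert–Schmidt orthogonal complement of the span of its elements is either `{0}` or the
complex line spanned by an invertible traceless selfadjoint matrix. -/
theorem pure_state_ic_dim3_characterization (n : ℕ) (A : Fin n → Matrix (Fin 3) (Fin 3) ℂ)
    (hA : IsPOVM A) :
    IsIC A (PureStates 3) ↔
      ({B : Matrix (Fin 3) (Fin 3) ℂ | ∀ j, (Bᴴ * A j).trace = 0} = {0} ∨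
       ∃ T : Matrix (Fin 3) (Fin 3) ℂ, T.IsHermitian ∧ IsUnit T ∧ T.trace = 0 ∧
         {B : Matrix (Fin 3) (Fin 3) ℂ | ∀ j, (Bᴴ * A j).trace = 0} =
           {B : Matrix (Fin 3) (Fin 3) ℂ | ∃ c : ℂ, B = c • T}) := by
  obtain ⟨hpos, hsum⟩ := hA
  have hstar : ∀ B ∈ hilbertSchmidtOrthogonal A, star B ∈ hilbertSchmidtOrthogonal A :=
    fun B => star_mem_hilbertSchmidtOrthogonal fun j => (hpos j).isHermitian
  have hV : {B : Matrix (Fin 3) (Fin 3) ℂ | ∀ j, (Bᴴ * A j).trace = 0} =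
      hilbertSchmidtOrthogonal A := rfl
  rw [hV, isIC_pureStates_iff_forall_isUnit hsum,
    forall_isUnit_iff_eq_bot_or_eq_span (by decide) hstar,
    ← Submodule.bot_coe (R := ℂ) (M := Matrix (Fin 3) (Fin 3) ℂ), SetLike.coe_set_eq]
  refine or_congr_right (exists_congr fun T => ?_)
  have hspan : {B | ∃ c : ℂ, B = c • T} = ((ℂ ∙ T : Submodule ℂ _) : Set _) :=
    Set.ext fun B => by simp [Submodule.mem_span_singleton, eq_comm]
  rw [hspan, SetLike.coe_set_eq]
  constructor
  · rintro ⟨hTV, hT, hTu, h⟩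
    exact ⟨hT, hTu, trace_eq_zero_of_mem_hilbertSchmidtOrthogonal hsum hTV, h⟩
  · rintro ⟨hT, hTu, -, h⟩
    exact ⟨h ▸ Submodule.mem_span_singleton_self T, hT, hTu, h⟩
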